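/- If a Borel measure μ₀ on Ω₀ satisfies μ₀(S⁰_x △ S⁰_y) < ∞ for all x,y ∈ Γ, then μ₀ is finite on every compact subset of Ω₀. -/

import Mathlib

open MeasureTheory
open scoped symmDiff

/-- The universal space `Ω₀ = {0,1}^Γ` minus the two constant functions. -/
abbrev Omega0 (Γ : Type*) : Type _ :=
  {c : Γ → Bool // (∃ x, c x = true) ∧ (∃ x, c x = false)}

noncomputable instance (Γ : Type*) : MeasurableSpace (Omega0 Γ) := borel _

instance (Γ : Type*) : BorelSpace (Omega0 Γ) := ⟨rfl⟩

/-- `S⁰_x = {c ∈ Ω₀ : c(x) = 1}`. -/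
def S0 {Γ : Type*} (x : Γ) : Set (Omega0 Γ) := {c | c.1 x = true}

/-!
Every `c ∈ Ω₀` takes both values, say `c x = 1` and `c y = 0`, so the open cylinder
`S⁰_x \ S⁰_y ⊆ S⁰_x ∆ S⁰_y` is a neighbourhood of `c` of finite measure. A measure that is finite
at the neighbourhood filter of every point is finite on compact sets.
-/

open Filter Topology

namespace Omega0

variable {Γ : Type*}

theorem isClopen_S0 (x : Γ) : IsClopen (S0 x : Set (Omega0 Γ)) :=
  (isClopen_discrete {true}).preimage ((continuous_apply x).comp continuous_subtype_val)

theorem S0_diff_S0_mem_nhds {c : Omega0 Γ} {x y : Γ} (hx : c.1 x = true) (hy : c.1 y = false) :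
    S0 x \ S0 y ∈ 𝓝 c :=
  ((isClopen_S0 x).isOpen.sdiff (isClopen_S0 y).isClosed).mem_nhds ⟨hx, by simp [S0, hy]⟩

theorem finiteAtFilter_nhds_of_symmDiff_S0_ne_top {μ : Measure (Omega0 Γ)}
    (h : ∀ x y : Γ, μ (S0 x ∆ S0 y) ≠ ⊤) (c : Omega0 Γ) : μ.FiniteAtFilter (𝓝 c) := by
  obtain ⟨⟨x, hx⟩, ⟨y, hy⟩⟩ := c.2
  exact ⟨_, S0_diff_S0_mem_nhds hx hy,
    (measure_mono (le_sup_left : S0 x \ S0 y ≤ S0 x ∆ S0 y)).trans_lt (h x y).lt_top⟩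

end Omega0

theorem finite_on_symmdiffs_implies_finite_on_compacts_general {Γ : Type*}
    (μ : Measure (Omega0 Γ)) (h : ∀ x y : Γ, μ (S0 x ∆ S0 y) ≠ ⊤) :
    ∀ K : Set (Omega0 Γ), IsCompact K → μ K ≠ ⊤ := fun _ hK =>
  (hK.measure_lt_top_of_nhdsWithin fun c _ =>
    (Omega0.finiteAtFilter_nhds_of_symmDiff_S0_ne_top h c).filter_mono nhdsWithin_le_nhds).ne

/-- A Borel measure on `Ω₀` which is finite on all symmetric differences
`S⁰_x ∆ S⁰_y` is finite on all compact sets. -/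
theorem finite_on_symmdiffs_implies_finite_on_compacts {Γ : Type*} [Countable Γ]
    (μ : Measure (Omega0 Γ)) (h : ∀ x y : Γ, μ (S0 x ∆ S0 y) ≠ ⊤) :
    ∀ K : Set (Omega0 Γ), IsCompact K → μ K ≠ ⊤ :=
  finite_on_symmdiffs_implies_finite_on_compacts_general μ h
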